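/- Fix α ≠ 0 and let 𝔤 = 𝔤^α_{4.2} be the 4-dimensional real Lie algebra with basis e₁,...,e₄ and nonzero brackets [e₁,e₄] = αe₁, [e₂,e₄] = e₂, [e₃,e₄] = e₂ + e₃. A 4×4 real matrix R equals η·Id + D for some η ∈ ℝ and some derivation D of 𝔤 if and only if R₃₂ = R₄₁ = R₄₂ = R₄₃ = 0, R₂₁ + R₃₁ = αR₂₁, R₃₁ = αR₃₁, R₁₂ = αR₁₂, R₁₂ + R₁₃ = αR₁₃, and R₃₃ = R₂₂. In this case η = R₄₄. -/

import Mathlib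

/-!
The derivation identity is bilinear in `(x, y)` and linear in `D`, so being a derivation is a
system of linear equations on the entries of `D`. Testing it on the pairs `(eᵢ, e₄)`, `i = 1, 2, 3`,
already produces the whole system, and conversely the system makes the identity hold for all
`x, y`. Among the equations is `D₄₄ = 0`, coming from `[e₁, e₄] = α e₁` with `α ≠ 0`. Hence in
`R = η • 1 + D` the scalar is `η = R₄₄`, and `R` has this form exactly when `R - R₄₄ • 1` solves
the system; subtracting a scalar leaves the off-diagonal entries and `R₃₃ - R₂₂` unchanged.
-/

open Matrix

def br (α : ℝ) (x y : Fin 4 → ℝ) : Fin 4 → ℝ :=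
  ![α * (x 0 * y 3 - x 3 * y 0), (x 1 * y 3 - x 3 * y 1) + (x 2 * y 3 - x 3 * y 2), (x 2 * y 3 - x 3 * y 2), (0:ℝ)]

def IsDer (α : ℝ) (D : Matrix (Fin 4) (Fin 4) ℝ) : Prop :=
  ∀ x y : Fin 4 → ℝ, D.mulVec (br α x y) = br α (D.mulVec x) y + br α x (D.mulVec y)

theorem isDer_iff {α : ℝ} (hα : α ≠ 0) {D : Matrix (Fin 4) (Fin 4) ℝ} :
    IsDer α D ↔ D 2 1 = 0 ∧ D 3 0 = 0 ∧ D 3 1 = 0 ∧ D 3 2 = 0 ∧ D 1 0 + D 2 0 = α * D 1 0 ∧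
      D 2 0 = α * D 2 0 ∧ D 0 1 = α * D 0 1 ∧ D 0 1 + D 0 2 = α * D 0 2 ∧ D 2 2 = D 1 1 ∧
      D 3 3 = 0 := by
  constructor
  · intro hD
    have h0 := hD ![1, 0, 0, 0] ![0, 0, 0, 1]
    have h1 := hD ![0, 1, 0, 0] ![0, 0, 0, 1]
    have h2 := hD ![0, 0, 1, 0] ![0, 0, 0, 1]
    simp only [br, mulVec, dotProduct, Fin.sum_univ_four, funext_iff, Fin.forall_fin_succ, Fin.isValue,
      cons_val_zero, cons_val_one, cons_val, cons_val_succ, cons_val_fin_one, head_cons, tail_cons,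
      add_cons, empty_add_empty, Fin.succ_zero_eq_one, Fin.succ_one_eq_two, Fin.reduceSucc,
      IsEmpty.forall_iff, mul_one, mul_zero, one_mul, zero_mul, add_zero, zero_add, sub_zero, sub_self,
      mul_eq_zero, and_true, true_and] at h0 h1 h2
    obtain ⟨h00, h10, h20, h30⟩ := h0
    obtain ⟨h01, h11, h31⟩ := h1
    obtain ⟨h02, h12, -, h32⟩ := h2
    have h33 : D 3 3 = 0 := by
      have : α * D 3 3 = 0 := by linear_combination -h00
      exact (mul_eq_zero.mp this).resolve_left hα
    refine ⟨by linarith, h30.resolve_right hα, h31, by linarith, by linarith, by linarith, h01, h02,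
      by linarith, h33⟩
  · rintro ⟨h21, h30, h31, h32, h10, h20, h01, h02, h22, h33⟩ x y
    funext i
    fin_cases i <;>
      simp only [br, mulVec, dotProduct, Fin.sum_univ_four, Pi.add_apply, Fin.isValue, Fin.zero_eta,
        Fin.mk_one, Fin.reduceFinMk, cons_val_zero, cons_val_one, cons_val, h21, h30, h31, h32, h33,
        mul_zero, zero_mul, add_zero, sub_zero, zero_sub, mul_neg]
    · linear_combination (x 1 * y 3 - x 3 * y 1) * h01 + (x 2 * y 3 - x 3 * y 2) * h02
    · linear_combination -(x 0 * y 3 - x 3 * y 0) * h10 - (x 2 * y 3 - x 3 * y 2) * h22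
    · linear_combination -(x 0 * y 3 - x 3 * y 0) * h20

theorem isDer_sub_smul_one_iff {α : ℝ} (hα : α ≠ 0) (R : Matrix (Fin 4) (Fin 4) ℝ) (η : ℝ) :
    IsDer α (R - η • 1) ↔ (R 2 1 = 0 ∧ R 3 0 = 0 ∧ R 3 1 = 0 ∧ R 3 2 = 0 ∧
      R 1 0 + R 2 0 = α * R 1 0 ∧ R 2 0 = α * R 2 0 ∧ R 0 1 = α * R 0 1 ∧
      R 0 1 + R 0 2 = α * R 0 2 ∧ R 2 2 = R 1 1) ∧ R 3 3 = η := by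
  simp [isDer_iff hα, sub_eq_zero, and_assoc]

theorem stmt_12 (α : ℝ) (hα : α ≠ 0) (R : Matrix (Fin 4) (Fin 4) ℝ) :
    ((∃ (η : ℝ) (D : Matrix (Fin 4) (Fin 4) ℝ), IsDer α D ∧
        R = η • (1 : Matrix (Fin 4) (Fin 4) ℝ) + D) ↔
      (R 2 1 = 0 ∧ R 3 0 = 0 ∧ R 3 1 = 0 ∧ R 3 2 = 0 ∧ R 1 0 + R 2 0 = α * R 1 0 ∧ R 2 0 = α * R 2 0 ∧ R 0 1 = α * R 0 1 ∧ R 0 1 + R 0 2 = α * R 0 2 ∧ R 2 2 = R 1 1)) ∧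
    (∀ (η : ℝ) (D : Matrix (Fin 4) (Fin 4) ℝ), IsDer α D →
      R = η • (1 : Matrix (Fin 4) (Fin 4) ℝ) + D → η = R 3 3) := by
  have eq_sub {η : ℝ} {D : Matrix (Fin 4) (Fin 4) ℝ} (hR : R = η • 1 + D) : D = R - η • 1 :=
    eq_sub_of_add_eq' hR.symm
  refine ⟨⟨?_, fun h => ?_⟩, fun η D hD hR => ?_⟩
  · rintro ⟨η, D, hD, hR⟩
    exact ((isDer_sub_smul_one_iff hα R η).1 (eq_sub hR ▸ hD)).1
  · exact ⟨R 3 3, R - R 3 3 • 1, (isDer_sub_smul_one_iff hα R _).2 ⟨h, rfl⟩, by abel⟩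
  · exact ((isDer_sub_smul_one_iff hα R η).1 (eq_sub hR ▸ hD)).2.symm
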